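/- (Inversion formula for trapezoidal gCQ) Let x_0,…,x_n be distinct complex points, K : ℂ → ℂ a function with K(x_i) ≠ 0 for all i, and g_0,…,g_n, φ_0,…,φ_n ∈ ℂ. If φ_m = Σ_{j=0}^{m} (−1)^{m−j+1} g_j ⟨x_j,…,x_m⟩K for all m = 0,…,n, then g_n = Σ_{ℓ=0}^{n} (−1)^{n−ℓ+1} φ_ℓ ⟨x_ℓ,…,x_n⟩K^{−1}, where K^{−1}(x) = 1/K(x). -/

import Mathlib

/-- Auxiliary: divided difference over points `x m, …, x (m+g)`. -/
noncomputable def ddAux (x : ℕ → ℂ) (f : ℂ → ℂ) : ℕ → ℕ → ℂ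
  | 0, m => f (x m)
  | g + 1, m => (ddAux x f g m - ddAux x f g (m + 1)) / (x m - x (m + (g + 1)))

/-- Newton divided difference `[x_m, …, x_j] f`. -/
noncomputable def dd (x : ℕ → ℂ) (f : ℂ → ℂ) (m j : ℕ) : ℂ := ddAux x f (j - m) m

/-- Modified divided difference `⟨x_m, …, x_j⟩ f`. -/
noncomputable def mdd (x : ℕ → ℂ) (f : ℂ → ℂ) (m j : ℕ) : ℂ :=
  if m < j then
    (x m + x (m + 1)) *
      dd x (fun z => f z * ∏ k ∈ Finset.Icc (m + 2) j, (x k + z)) m j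
  else f (x j)

/-! The map `f ↦ ⟨x_m, …, x_j⟩ f` satisfies the Leibniz rule
`⟨x_m, …, x_j⟩ (f g) = ∑_{m ≤ ℓ ≤ j} ⟨x_m, …, x_ℓ⟩ f · ⟨x_ℓ, …, x_j⟩ g`,
and `⟨x_m, …, x_j⟩ 1 = δ_{mj}`; hence the triangular arrays `⟨x_m, …, x_j⟩ K` and
`⟨x_m, …, x_j⟩ K⁻¹` are mutually inverse. Substituting the hypothesis for `φ` and exchanging the
two sums leaves only `g n`.

The Leibniz rule is proved first for a polynomial left factor, by induction on the polynomial: the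
step is multiplication by `z`, controlled by `[x_m, …, x_j]((z - x_m) h) = [x_{m+1}, …, x_j] h`.
All the operators only see the values at the nodes, so Lagrange interpolation extends the rule to
arbitrary functions. -/

open Finset Polynomial

section

variable {x : ℕ → ℂ}

theorem dd_self (f : ℂ → ℂ) (m : ℕ) : dd x f m m = f (x m) := by
  simp [dd, ddAux]

theorem ddAux_add (f g : ℂ → ℂ) :
    ∀ d m, ddAux x (fun z => f z + g z) d m = ddAux x f d m + ddAux x g d m
  | 0, _ => rfl
  | d + 1, m => by
    simp only [ddAux, ddAux_add f g d]
    ring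

theorem dd_add (f g : ℂ → ℂ) (m j : ℕ) :
    dd x (fun z => f z + g z) m j = dd x f m j + dd x g m j :=
  ddAux_add f g _ m

theorem ddAux_const_mul (c : ℂ) (f : ℂ → ℂ) :
    ∀ d m, ddAux x (fun z => c * f z) d m = c * ddAux x f d m
  | 0, _ => rfl
  | d + 1, m => by
    simp only [ddAux, ddAux_const_mul c f d]
    ring

theorem dd_const_mul (c : ℂ) (f : ℂ → ℂ) (m j : ℕ) :
    dd x (fun z => c * f z) m j = c * dd x f m j :=
  ddAux_const_mul c f _ m

theorem ddAux_congr {f g : ℂ → ℂ} :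
    ∀ d m, (∀ i, m ≤ i → i ≤ m + d → f (x i) = g (x i)) → ddAux x f d m = ddAux x g d m
  | 0, m, h => h m le_rfl le_rfl
  | d + 1, m, h => by
    rw [ddAux, ddAux, ddAux_congr d m fun i h₁ h₂ => h i h₁ (by omega),
      ddAux_congr d (m + 1) fun i h₁ h₂ => h i (by omega) (by omega)]

theorem dd_congr {f g : ℂ → ℂ} {m j : ℕ} (hmj : m ≤ j)
    (h : ∀ i, m ≤ i → i ≤ j → f (x i) = g (x i)) : dd x f m j = dd x g m j :=
  ddAux_congr _ m fun i h₁ h₂ => h i h₁ (by omega)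

theorem ddAux_const (c : ℂ) : ∀ d m, ddAux x (fun _ => c) (d + 1) m = 0
  | 0, _ => by simp [ddAux]
  | d + 1, m => by rw [ddAux, ddAux_const c d, ddAux_const c d, sub_self, zero_div]

theorem dd_const (c : ℂ) {m j : ℕ} (hmj : m < j) : dd x (fun _ => c) m j = 0 := by
  obtain ⟨d, rfl⟩ : ∃ d, j = m + d + 1 := ⟨j - m - 1, by omega⟩
  rw [dd, show m + d + 1 - m = d + 1 by omega, ddAux_const]

theorem sub_ne_zero_of_injOn_Iic {n : ℕ} (hx : Set.InjOn x (Set.Iic n)) {i j : ℕ}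
    (hi : i ≤ n) (hj : j ≤ n) (hij : i ≠ j) : x i - x j ≠ 0 :=
  sub_ne_zero.2 (hx.ne hi hj hij)

theorem dd_succ_mul_sub {n : ℕ} (hx : Set.InjOn x (Set.Iic n)) (f : ℂ → ℂ) {m j : ℕ}
    (hmj : m ≤ j) (hj : j + 1 ≤ n) :
    dd x f m (j + 1) * (x m - x (j + 1)) = dd x f m j - dd x f (m + 1) (j + 1) := by
  obtain ⟨d, rfl⟩ : ∃ d, j = m + d := ⟨j - m, by omega⟩
  simp only [dd, show m + d + 1 - m = d + 1 by omega, show m + d - m = d by omega,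
    show m + d + 1 - (m + 1) = d by omega]
  rw [ddAux, ← add_assoc, div_mul_cancel₀ _ (sub_ne_zero_of_injOn_Iic hx (by omega) hj (by omega))]

theorem dd_sub_mul {n : ℕ} (hx : Set.InjOn x (Set.Iic n)) (h : ℂ → ℂ) {m j : ℕ}
    (hmj : m < j) (hj : j ≤ n) :
    dd x (fun z => (z - x m) * h z) m j = dd x h (m + 1) j := by
  obtain ⟨k, rfl⟩ : ∃ k, j = k + 1 := ⟨j - 1, by omega⟩
  refine mul_right_cancel₀ (sub_ne_zero_of_injOn_Iic hx (by omega) hj hmj.ne) ?_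
  rw [dd_succ_mul_sub hx _ (by omega) hj]
  rcases (Nat.le_of_lt_succ hmj).eq_or_lt with rfl | hmk
  · simp only [dd_self]
    ring
  · have hshift : dd x (fun z => (z - x m) * h z) (m + 1) (k + 1)
        = dd x h (m + 2) (k + 1) + (x (m + 1) - x m) * dd x h (m + 1) (k + 1) := by
      rw [show (fun z => (z - x m) * h z)
          = fun z => (z - x (m + 1)) * h z + (x (m + 1) - x m) * h z by funext; ring,
        dd_add, dd_const_mul, dd_sub_mul hx h (by omega) hj]
    rw [dd_sub_mul hx h hmk (by omega), hshift]
    linear_combination -dd_succ_mul_sub hx h (m := m + 1) (j := k) (by omega) hj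
termination_by j - m

theorem dd_add_mul {n : ℕ} (hx : Set.InjOn x (Set.Iic n)) (h : ℂ → ℂ) (c : ℂ) {m j : ℕ}
    (hmj : m < j) (hj : j ≤ n) :
    dd x (fun z => (c + z) * h z) m j = (c + x m) * dd x h m j + dd x h (m + 1) j := by
  rw [show (fun z => (c + z) * h z) = fun z => (c + x m) * h z + (z - x m) * h z by
      funext; ring,
    dd_add, dd_const_mul, dd_sub_mul hx h hmj hj]

theorem dd_prod_eq_zero {n : ℕ} (hx : Set.InjOn x (Set.Iic n)) {m a j : ℕ}
    (hmj : m < j) (hj : j ≤ n) (ha : m + 2 ≤ a) :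
    dd x (fun z => ∏ k ∈ Icc a j, (x k + z)) m j = 0 := by
  -- a polynomial of degree `j + 1 - a < j - m` in `z`
  rcases le_or_gt a j with haj | haj
  · rw [show (fun z => ∏ k ∈ Icc a j, (x k + z))
        = fun z => (x a + z) * ∏ k ∈ Icc (a + 1) j, (x k + z) by
        funext; rw [Icc_eq_cons_Ioc haj, prod_cons, Icc_add_one_left_eq_Ioc],
      dd_add_mul hx _ _ hmj hj, dd_prod_eq_zero hx hmj hj (by omega),
      dd_prod_eq_zero hx (by omega) hj (by omega), mul_zero, add_zero]
  · simpa [Icc_eq_empty_of_lt haj] using dd_const (x := x) 1 hmj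
termination_by j + 1 - a

theorem mdd_self (f : ℂ → ℂ) (j : ℕ) : mdd x f j j = f (x j) :=
  if_neg (lt_irrefl j)

theorem mdd_of_lt (f : ℂ → ℂ) {m j : ℕ} (hmj : m < j) :
    mdd x f m j
      = (x m + x (m + 1)) * dd x (fun z => f z * ∏ k ∈ Icc (m + 2) j, (x k + z)) m j :=
  if_pos hmj

theorem mdd_congr {f g : ℂ → ℂ} {m j : ℕ} (hmj : m ≤ j)
    (h : ∀ i, m ≤ i → i ≤ j → f (x i) = g (x i)) : mdd x f m j = mdd x g m j := by
  rcases hmj.eq_or_lt with rfl | hmj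
  · rw [mdd_self, mdd_self, h m le_rfl le_rfl]
  · rw [mdd_of_lt f hmj, mdd_of_lt g hmj]
    congr 1
    exact dd_congr hmj.le fun i h₁ h₂ => by rw [h i h₁ h₂]

theorem mdd_add (f g : ℂ → ℂ) (m j : ℕ) :
    mdd x (fun z => f z + g z) m j = mdd x f m j + mdd x g m j := by
  simp only [mdd, add_mul, dd_add]
  split_ifs <;> ring

theorem mdd_const_mul (c : ℂ) (f : ℂ → ℂ) (m j : ℕ) :
    mdd x (fun z => c * f z) m j = c * mdd x f m j := by
  simp only [mdd, mul_assoc, dd_const_mul]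
  split_ifs <;> ring

theorem mdd_const {n : ℕ} (hx : Set.InjOn x (Set.Iic n)) (c : ℂ) {m j : ℕ}
    (hmj : m ≤ j) (hj : j ≤ n) : mdd x (fun _ => c) m j = if m = j then c else 0 := by
  rcases hmj.eq_or_lt with rfl | hmj
  · rw [mdd_self, if_pos rfl]
  · rw [mdd_of_lt _ hmj, dd_const_mul, dd_prod_eq_zero hx hmj hj le_rfl, if_neg hmj.ne]
    ring

theorem dd_mul_prod_eq_sum_mdd {n : ℕ} (hx : Set.InjOn x (Set.Iic n)) (f : ℂ → ℂ) {a j : ℕ}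
    (haj : a ≤ j) (hj : j ≤ n) :
    dd x (fun z => f z * ∏ k ∈ Icc (a + 1) j, (x k + z)) a j = ∑ ℓ ∈ Icc a j, mdd x f ℓ j := by
  rcases haj.eq_or_lt with rfl | haj
  · simp [dd_self, mdd_self]
  · rw [show (fun z => f z * ∏ k ∈ Icc (a + 1) j, (x k + z))
        = fun z => (x (a + 1) + z) * (f z * ∏ k ∈ Icc (a + 2) j, (x k + z)) by
        funext
        rw [Icc_eq_cons_Ioc haj, prod_cons, ← Icc_add_one_left_eq_Ioc]
        exact mul_left_comm _ _ _,
      dd_add_mul hx _ _ haj hj, dd_mul_prod_eq_sum_mdd hx f (a := a + 1) haj hj,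
      add_comm (x (a + 1)), ← mdd_of_lt f haj, ← add_sum_Ioc_eq_sum_Icc haj.le, Icc_add_one_left_eq_Ioc]
termination_by j - a

theorem mdd_id_mul {n : ℕ} (hx : Set.InjOn x (Set.Iic n)) (f : ℂ → ℂ) {m j : ℕ}
    (hmj : m ≤ j) (hj : j ≤ n) :
    mdd x (fun z => z * f z) m j
      = x m * mdd x f m j + (x m + x (m + 1)) * ∑ ℓ ∈ Icc (m + 1) j, mdd x f ℓ j := by
  rcases hmj.eq_or_lt with rfl | hmj
  · simp [mdd_self]
  · rw [mdd_of_lt _ hmj, mdd_of_lt f hmj,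
      show (fun z => z * f z * ∏ k ∈ Icc (m + 2) j, (x k + z))
        = fun z => x m * (f z * ∏ k ∈ Icc (m + 2) j, (x k + z))
          + (z - x m) * (f z * ∏ k ∈ Icc (m + 2) j, (x k + z)) by funext; ring,
      dd_add, dd_const_mul, dd_sub_mul hx _ hmj hj, dd_mul_prod_eq_sum_mdd hx f hmj hj]
    ring

theorem mdd_polynomial_mul {n : ℕ} (hx : Set.InjOn x (Set.Iic n)) (p : ℂ[X]) (g : ℂ → ℂ)
    {m j : ℕ} (hmj : m ≤ j) (hj : j ≤ n) :
    mdd x (fun z => p.eval z * g z) m j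
      = ∑ ℓ ∈ Icc m j, mdd x p.eval m ℓ * mdd x g ℓ j := by
  induction p using Polynomial.induction_on generalizing m with
  | C a =>
    simp only [eval_C, mdd_const_mul]
    rw [sum_congr rfl fun ℓ hℓ => by
      rw [mdd_const hx a (mem_Icc.1 hℓ).1 ((mem_Icc.1 hℓ).2.trans hj)]]
    simp [hmj]
  | add p q hp hq =>
    simp only [eval_add, add_mul, mdd_add, hp hmj, hq hmj, ← sum_add_distrib]
  | monomial k a ih =>
    have hX : ∀ z, eval z (C a * X ^ (k + 1)) = z * eval z (C a * X ^ k) := fun z => by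
      simp only [eval_mul, eval_C, eval_pow, eval_X, pow_succ]
      ring
    simp only [hX, mul_assoc]
    rw [mdd_id_mul hx _ hmj hj, ih hmj, sum_congr rfl fun t ht => ih (mem_Icc.1 ht).2,
      sum_comm' (t' := Icc m j) (s' := fun ℓ => Icc (m + 1) ℓ) fun t ℓ => by
        simp only [mem_Icc]; omega]
    conv_rhs => rw [sum_congr rfl fun ℓ hℓ => by
      rw [mdd_id_mul hx _ (mem_Icc.1 hℓ).1 ((mem_Icc.1 hℓ).2.trans hj)]]
    simp only [add_mul, sum_add_distrib, mul_sum, sum_mul, mul_assoc]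

theorem exists_polynomial_eval_eq {n : ℕ} (hx : Set.InjOn x (Set.Iic n)) (f : ℂ → ℂ) :
    ∃ p : ℂ[X], ∀ i ≤ n, p.eval (x i) = f (x i) := by
  have hinj : Set.InjOn x (range (n + 1)) :=
    hx.mono fun i hi => Set.mem_Iic.2 (Nat.lt_succ_iff.1 (mem_range.1 hi))
  exact ⟨Lagrange.interpolate (range (n + 1)) x (fun i => f (x i)), fun i hi =>
    Lagrange.eval_interpolate_at_node _ hinj (mem_range.2 (Nat.lt_succ_of_le hi))⟩

theorem mdd_mul {n : ℕ} (hx : Set.InjOn x (Set.Iic n)) (f g : ℂ → ℂ) {m j : ℕ}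
    (hmj : m ≤ j) (hj : j ≤ n) :
    mdd x (fun z => f z * g z) m j = ∑ ℓ ∈ Icc m j, mdd x f m ℓ * mdd x g ℓ j := by
  obtain ⟨p, hp⟩ := exists_polynomial_eval_eq hx f
  rw [mdd_congr (g := fun z => p.eval z * g z) hmj fun i _ hi => by rw [hp i (hi.trans hj)],
    mdd_polynomial_mul hx p g hmj hj]
  refine sum_congr rfl fun ℓ hℓ => ?_
  rw [mdd_congr (g := f) (mem_Icc.1 hℓ).1 fun i _ hi => hp i (hi.trans ((mem_Icc.1 hℓ).2.trans hj))]

theorem sum_mdd_mul_mdd_inv {n : ℕ} (hx : Set.InjOn x (Set.Iic n)) {K : ℂ → ℂ}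
    (hK : ∀ i ≤ n, K (x i) ≠ 0) {m : ℕ} (hm : m ≤ n) :
    ∑ ℓ ∈ Icc m n, mdd x K m ℓ * mdd x (fun z => (K z)⁻¹) ℓ n = if m = n then 1 else 0 := by
  rw [← mdd_mul hx _ _ hm le_rfl,
    mdd_congr (f := fun z => K z * (K z)⁻¹) (g := fun _ => 1) hm fun i _ hi =>
      mul_inv_cancel₀ (hK i hi),
    mdd_const hx 1 hm le_rfl]

end

/-- Inversion formula for the trapezoidal gCQ. -/
theorem mdd_inversion (x : ℕ → ℂ) (n : ℕ)
    (hdist : ∀ i j, i ≤ n → j ≤ n → i ≠ j → x i ≠ x j)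
    (K : ℂ → ℂ) (hK : ∀ i, i ≤ n → K (x i) ≠ 0)
    (g φ : ℕ → ℂ)
    (hφ : ∀ m, m ≤ n →
      φ m = ∑ j ∈ Finset.range (m + 1), (-1 : ℂ) ^ (m - j + 1) * g j * mdd x K j m) :
    g n = ∑ ℓ ∈ Finset.range (n + 1),
      (-1 : ℂ) ^ (n - ℓ + 1) * φ ℓ * mdd x (fun z => (K z)⁻¹) ℓ n := by
  have hx : Set.InjOn x (Set.Iic n) := fun i hi j hj hij =>
    by_contra fun hne => hdist i j hi hj hne hij
  have hsign : ∀ j ℓ, j ≤ ℓ → ℓ ≤ n →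
      (-1 : ℂ) ^ (n - ℓ + 1) * (-1) ^ (ℓ - j + 1) = (-1) ^ (n - j) := fun j ℓ hjℓ hℓn => by
    rw [← pow_add, show n - ℓ + 1 + (ℓ - j + 1) = n - j + 2 by omega, pow_add, neg_one_sq, mul_one]
  symm
  calc ∑ ℓ ∈ range (n + 1), (-1 : ℂ) ^ (n - ℓ + 1) * φ ℓ * mdd x (fun z => (K z)⁻¹) ℓ n
      = ∑ ℓ ∈ range (n + 1), ∑ j ∈ range (ℓ + 1),
          (-1) ^ (n - j) * g j * (mdd x K j ℓ * mdd x (fun z => (K z)⁻¹) ℓ n) := by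
        refine sum_congr rfl fun ℓ hℓ => ?_
        rw [hφ ℓ (Nat.lt_succ_iff.1 (mem_range.1 hℓ)), mul_sum, sum_mul]
        refine sum_congr rfl fun j hj => ?_
        rw [← hsign j ℓ (Nat.lt_succ_iff.1 (mem_range.1 hj)) (Nat.lt_succ_iff.1 (mem_range.1 hℓ))]
        ring
    _ = ∑ j ∈ range (n + 1), (-1) ^ (n - j) * g j *
          ∑ ℓ ∈ Icc j n, mdd x K j ℓ * mdd x (fun z => (K z)⁻¹) ℓ n := by
        rw [sum_comm' (t' := range (n + 1)) (s' := fun j => Icc j n) fun ℓ j => by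
          simp only [mem_range, mem_Icc]; omega]
        simp only [mul_sum]
    _ = g n := by
        rw [sum_congr rfl fun j hj =>
          by rw [sum_mdd_mul_mdd_inv hx hK (Nat.lt_succ_iff.1 (mem_range.1 hj))]]
        simp
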